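/- arXiv:2305.17326 — 4 statements merged into one kernel-verified Lean document; each statement's English description precedes it below -/
import Mathlib

section
/- Let P and Q be n×n real symmetric positive definite matrices. Then MKL(P‖Q) ≥ 0, and MKL(P‖Q) = 0 if and only if Q = P. Consequently, for fixed positive definite P, the unique minimizer of Q ↦ MKL(P‖Q) over all symmetric positive definite matrices Q is Q = P. -/
open Matrix MeasureTheory

/-- Principal matrix logarithm of a real symmetric matrix, defined via the spectral
decomposition by applying `Real.log` to the eigenvalues (junk value `0` otherwise). -/
noncomputable def matrixLog {n : Type*} [Fintype n] [DecidableEq n]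
    (A : Matrix n n ℝ) : Matrix n n ℝ :=
  if hA : A.IsHermitian then
    (hA.eigenvectorUnitary : Matrix n n ℝ) * Matrix.diagonal (Real.log ∘ hA.eigenvalues) *
      star (hA.eigenvectorUnitary : Matrix n n ℝ)
  else 0

/-- Matrix KL divergence `MKL(P‖Q) = tr(P log P − P log Q − P + Q)`. -/
noncomputable def MKL {n : Type*} [Fintype n] [DecidableEq n]
    (P Q : Matrix n n ℝ) : ℝ :=
  (P * matrixLog P - P * matrixLog Q - P + Q).trace

/-- Matrix cross-entropy `MCE(P, Q) = tr(−P log Q + Q)`. -/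
noncomputable def MCE {n : Type*} [Fintype n] [DecidableEq n]
    (P Q : Matrix n n ℝ) : ℝ :=
  (-(P * matrixLog Q) + Q).trace

/-- Effective rank of a symmetric matrix (junk value `0` if not Hermitian), defined as the
exponential of the Shannon entropy of the normalized eigenvalue distribution; note that
`Real.log 0 = 0` in Mathlib, implementing the convention `0 · log 0 = 0`. -/
noncomputable def erank {n : Type*} [Fintype n] [DecidableEq n]
    (A : Matrix n n ℝ) : ℝ :=
  if hA : A.IsHermitian then
    Real.exp (-∑ i, (hA.eigenvalues i / ∑ k, hA.eigenvalues k) *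
      Real.log (hA.eigenvalues i / ∑ k, hA.eigenvalues k))
  else 0

/-- Total coding rate loss `L_TCR(Z) = −(1/2)·log det(I_d + (d/(Bε²))·ZZᵀ)`. -/
noncomputable def LTCR {d B : ℕ} (ε : ℝ) (Z : Matrix (Fin d) (Fin B) ℝ) : ℝ :=
  -(1 / 2) * Real.log ((1 + ((d : ℝ) / (B * ε ^ 2)) • (Z * Zᵀ)).det)


private lemma klein_nonneg {d e : ℝ} (hd : 0 < d) (he : 0 < e) :
    0 ≤ d * Real.log d - d * Real.log e - d + e := by
  have h := Real.log_le_sub_one_of_pos (div_pos he hd)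
  rw [Real.log_div he.ne' hd.ne'] at h
  have h2 := mul_le_mul_of_nonneg_left h hd.le
  rw [mul_sub, mul_sub, mul_div_cancel₀ _ hd.ne'] at h2
  nlinarith

private lemma klein_eq {d e : ℝ} (hd : 0 < d) (he : 0 < e)
    (h : d * Real.log d - d * Real.log e - d + e = 0) : d = e := by
  by_contra hne
  have hx : e / d ≠ 1 := by
    intro h1
    exact hne ((div_eq_one_iff_eq hd.ne').mp h1).symm
  have h2 := Real.log_lt_sub_one_of_pos (div_pos he hd) hx
  rw [Real.log_div he.ne' hd.ne'] at h2
  have h3 := mul_lt_mul_of_pos_left h2 hd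
  rw [mul_sub, mul_sub, mul_div_cancel₀ _ hd.ne'] at h3
  nlinarith

private lemma trace_formula {n : ℕ} (a b : Fin n → ℝ) (W : Matrix (Fin n) (Fin n) ℝ) :
    (Matrix.diagonal a * (W * Matrix.diagonal b * star W)).trace
      = ∑ i, ∑ j, a i * (W i j) ^ 2 * b j := by
  have h : ∀ i, (Matrix.diagonal a * (W * Matrix.diagonal b * star W)) i i
      = ∑ j, a i * (W i j) ^ 2 * b j := by
    intro i
    rw [Matrix.diagonal_mul, Matrix.mul_apply, Finset.mul_sum]
    refine Finset.sum_congr rfl fun j _ => ?_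
    rw [Matrix.mul_diagonal, Matrix.star_apply, star_trivial]
    ring
  simp only [Matrix.trace, Matrix.diag]
  exact Finset.sum_congr rfl fun i _ => h i

private lemma trace_conj_pair {n : ℕ} (a b : Fin n → ℝ) (A B : Matrix (Fin n) (Fin n) ℝ) :
    (A * Matrix.diagonal a * star A * (B * Matrix.diagonal b * star B)).trace
      = ∑ i, ∑ j, a i * ((star A * B) i j) ^ 2 * b j := by
  have h1 : A * Matrix.diagonal a * star A * (B * Matrix.diagonal b * star B)
      = A * (Matrix.diagonal a * (star A * B * Matrix.diagonal b * star B)) := by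
    simp only [Matrix.mul_assoc]
  rw [h1, Matrix.trace_mul_comm]
  have h2 : Matrix.diagonal a * (star A * B * Matrix.diagonal b * star B) * A
      = Matrix.diagonal a * (star A * B * Matrix.diagonal b * star (star A * B)) := by
    rw [Matrix.star_mul, star_star]
    simp only [Matrix.mul_assoc]
  rw [h2, trace_formula]

/-- For symmetric positive definite `P, Q`, the matrix KL divergence is
nonnegative, vanishes exactly when `Q = P`, and hence `Q = P` is the unique minimizer
of `Q ↦ MKL(P‖Q)` over positive definite matrices. -/
theorem mkl_nonneg_and_eq_zero_iff_and_unique_min {n : ℕ}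
    (P Q : Matrix (Fin n) (Fin n) ℝ) (hP : P.PosDef) (hQ : Q.PosDef) :
    0 ≤ MKL P Q ∧ (MKL P Q = 0 ↔ Q = P) ∧
      ∀ Q' : Matrix (Fin n) (Fin n) ℝ, Q'.PosDef → Q' ≠ P → MKL P P < MKL P Q' := by
  have key : ∀ (Q : Matrix (Fin n) (Fin n) ℝ) (hQ : Q.PosDef),
      0 ≤ MKL P Q ∧ (MKL P Q = 0 → Q = P) := by
    intro Q hQ
    have hPh := hP.1
    have hQh := hQ.1
    set U : Matrix (Fin n) (Fin n) ℝ := (hPh.eigenvectorUnitary : Matrix (Fin n) (Fin n) ℝ) with hUdef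
    set V : Matrix (Fin n) (Fin n) ℝ := (hQh.eigenvectorUnitary : Matrix (Fin n) (Fin n) ℝ) with hVdef
    set d : Fin n → ℝ := hPh.eigenvalues with hddef
    set e : Fin n → ℝ := hQh.eigenvalues with hedef
    have hdpos : ∀ i, 0 < d i := fun i => hP.eigenvalues_pos i
    have hepos : ∀ j, 0 < e j := fun j => hQ.eigenvalues_pos j
    have hPspec : P = U * Matrix.diagonal d * star U := by
      have := hPh.spectral_theorem
      rwa [RCLike.ofReal_real_eq_id, Function.id_comp] at this
    have hQspec : Q = V * Matrix.diagonal e * star V := by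
      have := hQh.spectral_theorem
      rwa [RCLike.ofReal_real_eq_id, Function.id_comp] at this
    have hU1 : star U * U = 1 := Matrix.mem_unitaryGroup_iff'.mp hPh.eigenvectorUnitary.2
    have hU2 : U * star U = 1 := Matrix.mem_unitaryGroup_iff.mp hPh.eigenvectorUnitary.2
    have hV1 : star V * V = 1 := Matrix.mem_unitaryGroup_iff'.mp hQh.eigenvectorUnitary.2
    have hV2 : V * star V = 1 := Matrix.mem_unitaryGroup_iff.mp hQh.eigenvectorUnitary.2
    have hlogP : matrixLog P = U * Matrix.diagonal (Real.log ∘ d) * star U := by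
      rw [matrixLog, dif_pos hPh]
    have hlogQ : matrixLog Q = V * Matrix.diagonal (Real.log ∘ e) * star V := by
      rw [matrixLog, dif_pos hQh]
    set W : Matrix (Fin n) (Fin n) ℝ := star U * V with hWdef
    have hWsW : W * star W = 1 := by
      have h : W * star W = star U * (V * star V) * U := by
        rw [hWdef, Matrix.star_mul, star_star]
        simp only [Matrix.mul_assoc]
      rw [h, hV2, Matrix.mul_one, hU1]
    have hsWW : star W * W = 1 := by
      have h : star W * W = star V * (U * star U) * V := by
        rw [hWdef, Matrix.star_mul, star_star]
        simp only [Matrix.mul_assoc]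
      rw [h, hU2, Matrix.mul_one, hV1]
    have hrow : ∀ i, ∑ j, (W i j) ^ 2 = 1 := by
      intro i
      have h := congrFun (congrFun hWsW i) i
      simpa [Matrix.mul_apply, Matrix.star_apply, Matrix.one_apply, pow_two] using h
    have hcol : ∀ j, ∑ i, (W i j) ^ 2 = 1 := by
      intro j
      have h := congrFun (congrFun hsWW j) j
      simpa [Matrix.mul_apply, Matrix.star_apply, Matrix.one_apply, pow_two, mul_comm] using h
    have hMKL : MKL P Q = (P * matrixLog P).trace - (P * matrixLog Q).trace
        - P.trace + Q.trace := by
      simp [MKL, Matrix.trace_add, Matrix.trace_sub]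
    have h1 : (P * matrixLog P).trace = ∑ i, d i * Real.log (d i) := by
      rw [hlogP]
      nth_rewrite 1 [hPspec]
      rw [trace_conj_pair, ]
      refine Finset.sum_congr rfl fun i _ => ?_
      rw [hU1]
      rw [Finset.sum_eq_single i]
      · simp [Matrix.one_apply]
      · intro j _ hj
        simp [Matrix.one_apply_ne (Ne.symm hj)]
      · intro h; exact absurd (Finset.mem_univ i) h
    have h2 : (P * matrixLog Q).trace = ∑ i, ∑ j, d i * (W i j) ^ 2 * (Real.log ∘ e) j := by
      rw [hlogQ]
      nth_rewrite 1 [hPspec]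
      rw [trace_conj_pair, ← hWdef]
    have h3 : P.trace = ∑ i, d i := by
      rw [hPspec, Matrix.trace_mul_cycle, hU1, Matrix.one_mul, Matrix.trace_diagonal]
    have h4 : Q.trace = ∑ j, e j := by
      rw [hQspec, Matrix.trace_mul_cycle, hV1, Matrix.one_mul, Matrix.trace_diagonal]
    have hrwterm : ∀ i j, (W i j) ^ 2 *
        (d i * Real.log (d i) - d i * Real.log (e j) - d i + e j)
        = d i * Real.log (d i) * (W i j) ^ 2 - d i * (W i j) ^ 2 * (Real.log ∘ e) j
          - d i * (W i j) ^ 2 + e j * (W i j) ^ 2 := by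
      intro i j; simp only [Function.comp_apply]; ring
    have hsum : MKL P Q = ∑ i, ∑ j, (W i j) ^ 2 *
        (d i * Real.log (d i) - d i * Real.log (e j) - d i + e j) := by
      rw [hMKL, h1, h2, h3, h4]
      simp only [hrwterm, Finset.sum_add_distrib, Finset.sum_sub_distrib]
      have S1 : ∑ i, ∑ j, d i * Real.log (d i) * (W i j) ^ 2 = ∑ i, d i * Real.log (d i) := by
        refine Finset.sum_congr rfl fun i _ => ?_
        rw [← Finset.mul_sum, hrow i, mul_one]
      have S3 : ∑ i, ∑ j, d i * (W i j) ^ 2 = ∑ i, d i := by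
        refine Finset.sum_congr rfl fun i _ => ?_
        rw [← Finset.mul_sum, hrow i, mul_one]
      have S4 : ∑ i, ∑ j, e j * (W i j) ^ 2 = ∑ j, e j := by
        rw [Finset.sum_comm]
        refine Finset.sum_congr rfl fun j _ => ?_
        rw [← Finset.mul_sum, hcol j, mul_one]
      rw [S1, S3, S4]
    have hterm_nonneg : ∀ i ∈ Finset.univ, (0:ℝ) ≤ ∑ j, (W i j) ^ 2 *
        (d i * Real.log (d i) - d i * Real.log (e j) - d i + e j) := by
      intro i _
      refine Finset.sum_nonneg fun j _ => ?_
      exact mul_nonneg (sq_nonneg _) (klein_nonneg (hdpos i) (hepos j))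
    constructor
    · rw [hsum]
      exact Finset.sum_nonneg hterm_nonneg
    · intro hz
      rw [hsum] at hz
      have hall : ∀ i j, (W i j) ^ 2 *
          (d i * Real.log (d i) - d i * Real.log (e j) - d i + e j) = 0 := by
        intro i j
        have houter := (Finset.sum_eq_zero_iff_of_nonneg hterm_nonneg).mp hz i (Finset.mem_univ i)
        have hinner := (Finset.sum_eq_zero_iff_of_nonneg (fun j _ =>
          mul_nonneg (sq_nonneg _) (klein_nonneg (hdpos i) (hepos j)))).mp houter j (Finset.mem_univ j)
        exact hinner
      have hDW : Matrix.diagonal d * W = W * Matrix.diagonal e := by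
        ext i j
        rw [Matrix.diagonal_mul, Matrix.mul_diagonal]
        rcases eq_or_ne (W i j) 0 with h | h
        · rw [h, mul_zero, zero_mul]
        · have hf : d i * Real.log (d i) - d i * Real.log (e j) - d i + e j = 0 := by
            have := hall i j
            rcases mul_eq_zero.mp this with h' | h'
            · exact absurd (pow_eq_zero_iff (by norm_num) |>.mp h') h
            · exact h'
          rw [klein_eq (hdpos i) (hepos j) hf, mul_comm]
      have hVW : V = U * W := by
        rw [hWdef, ← Matrix.mul_assoc, hU2, Matrix.one_mul]
      have hWEW : W * Matrix.diagonal e * star W = Matrix.diagonal d := by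
        rw [← hDW, Matrix.mul_assoc, hWsW, Matrix.mul_one]
      calc Q = V * Matrix.diagonal e * star V := hQspec
        _ = U * (W * Matrix.diagonal e * star W) * star U := by
            rw [hVW, Matrix.star_mul]
            simp only [Matrix.mul_assoc]
        _ = U * Matrix.diagonal d * star U := by rw [hWEW]
        _ = P := hPspec.symm
  have hself : MKL P P = 0 := by
    have : P * matrixLog P - P * matrixLog P - P + P = 0 := by abel
    rw [MKL, this, Matrix.trace_zero]
  refine ⟨(key Q hQ).1, ⟨fun h => (key Q hQ).2 h, fun h => by rw [h, hself]⟩, ?_⟩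
  intro Q' hQ' hne
  rw [hself]
  rcases lt_or_eq_of_le (key Q' hQ').1 with h | h
  · exact h
  · exact absurd ((key Q' hQ').2 h.symm) hne
end

section
/- Let P and Q be n×n real symmetric positive definite matrices. Then MCE(P, Q) ≥ MCE(P, P) = tr(P) − tr(P log P), with equality if and only if Q = P. Consequently, for fixed positive definite P, the unique minimizer of Q ↦ MCE(P, Q) over all symmetric positive definite matrices Q is Q = P. -/
open Matrix MeasureTheory

lemma scalar_klein {a b : ℝ} (ha : 0 < a) (hb : 0 < b) :
    0 ≤ b - a - a * (Real.log b - Real.log a) := by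
  have h := Real.log_le_sub_one_of_pos (div_pos hb ha)
  rw [Real.log_div hb.ne' ha.ne'] at h
  have h2 := mul_le_mul_of_nonneg_left h ha.le
  have hba : a * (b / a - 1) = b - a := by field_simp
  nlinarith

lemma scalar_klein_strict {a b : ℝ} (ha : 0 < a) (hb : 0 < b) (hne : b ≠ a) :
    0 < b - a - a * (Real.log b - Real.log a) := by
  have hb1 : b / a ≠ 1 := by
    intro h
    exact hne (by field_simp at h; linarith)
  have h := Real.log_lt_sub_one_of_pos (div_pos hb ha) hb1
  rw [Real.log_div hb.ne' ha.ne'] at h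
  have h2 := mul_lt_mul_of_pos_left h ha
  have hba : a * (b / a - 1) = b - a := by field_simp
  nlinarith

lemma trace_diag_conj {m : Type*} [Fintype m] [DecidableEq m]
    (a b : m → ℝ) (W : Matrix m m ℝ) :
    (Matrix.diagonal a * (W * (Matrix.diagonal b * star W))).trace
      = ∑ i, ∑ j, a i * W i j ^ 2 * b j := by
  rw [Matrix.trace]
  refine Finset.sum_congr rfl fun i _ => ?_
  rw [Matrix.diag_apply, Matrix.diagonal_mul, Matrix.mul_apply, Finset.mul_sum]
  refine Finset.sum_congr rfl fun j _ => ?_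
  rw [Matrix.diagonal_mul, Matrix.star_apply, star_trivial]
  ring

lemma klein_main {n : ℕ} (P Q : Matrix (Fin n) (Fin n) ℝ) (hP : P.PosDef) (hQ : Q.PosDef) :
    MCE P P ≤ MCE P Q ∧ (MCE P Q = MCE P P ↔ Q = P) := by
  have hPh : P.IsHermitian := hP.1
  have hQh : Q.IsHermitian := hQ.1
  set V : Matrix (Fin n) (Fin n) ℝ := (hPh.eigenvectorUnitary : Matrix (Fin n) (Fin n) ℝ) with hVdef
  set U : Matrix (Fin n) (Fin n) ℝ := (hQh.eigenvectorUnitary : Matrix (Fin n) (Fin n) ℝ) with hUdef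
  set lam : Fin n → ℝ := hPh.eigenvalues with hlamdef
  set mu : Fin n → ℝ := hQh.eigenvalues with hmudef
  have hV1 : V * star V = 1 := Matrix.mem_unitaryGroup_iff.mp hPh.eigenvectorUnitary.2
  have hV2 : star V * V = 1 := Matrix.mem_unitaryGroup_iff'.mp hPh.eigenvectorUnitary.2
  have hU1 : U * star U = 1 := Matrix.mem_unitaryGroup_iff.mp hQh.eigenvectorUnitary.2
  have hU2 : star U * U = 1 := Matrix.mem_unitaryGroup_iff'.mp hQh.eigenvectorUnitary.2
  have hlam : ∀ i, 0 < lam i := fun i => hP.eigenvalues_pos i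
  have hmu : ∀ j, 0 < mu j := fun j => hQ.eigenvalues_pos j
  have hPspec : P = V * Matrix.diagonal lam * star V := by
    have := hPh.spectral_theorem
    rwa [RCLike.ofReal_real_eq_id, Function.id_comp] at this
  have hQspec : Q = U * Matrix.diagonal mu * star U := by
    have := hQh.spectral_theorem
    rwa [RCLike.ofReal_real_eq_id, Function.id_comp] at this
  set W : Matrix (Fin n) (Fin n) ℝ := star V * U with hWdef
  have hWstar : star W = star U * V := by rw [hWdef, StarMul.star_mul, star_star]
  have hW1 : W * star W = 1 := by
    rw [hWdef, hWstar]
    calc star V * U * (star U * V) = star V * (U * star U * V) := by simp only [mul_assoc]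
      _ = 1 := by rw [hU1, one_mul, hV2]
  have hW2 : star W * W = 1 := by
    rw [hWdef, hWstar]
    calc star U * V * (star V * U) = star U * (V * star V * U) := by simp only [mul_assoc]
      _ = 1 := by rw [hV1, one_mul, hU2]
  have hrow : ∀ i, ∑ j, W i j ^ 2 = 1 := by
    intro i
    have h := congrArg (fun M : Matrix (Fin n) (Fin n) ℝ => M i i) hW1
    simpa [Matrix.mul_apply, Matrix.one_apply, pow_two] using h
  have hcol : ∀ j, ∑ i, W i j ^ 2 = 1 := by
    intro j
    have h := congrArg (fun M : Matrix (Fin n) (Fin n) ℝ => M j j) hW2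
    simpa [Matrix.mul_apply, Matrix.one_apply, pow_two, mul_comm] using h
  have hlogQ : matrixLog Q = U * Matrix.diagonal (Real.log ∘ mu) * star U := by
    unfold matrixLog; rw [dif_pos hQh]
  have hlogP : matrixLog P = V * Matrix.diagonal (Real.log ∘ lam) * star V := by
    unfold matrixLog; rw [dif_pos hPh]
  -- trace of Q
  have htrQ : Q.trace = ∑ j, mu j := by
    rw [hQspec, Matrix.trace_mul_cycle, hU2, one_mul, Matrix.trace_diagonal]
  have htrP : P.trace = ∑ i, lam i := by
    rw [hPspec, Matrix.trace_mul_cycle, hV2, one_mul, Matrix.trace_diagonal]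
  -- trace of P * log Q
  have e1 : (P * matrixLog Q).trace = ∑ i, ∑ j, lam i * W i j ^ 2 * Real.log (mu j) := by
    rw [hPspec, hlogQ]
    rw [show V * Matrix.diagonal lam * star V * (U * Matrix.diagonal (Real.log ∘ mu) * star U)
        = V * (Matrix.diagonal lam * (star V * (U * (Matrix.diagonal (Real.log ∘ mu) * star U))))
        from by simp only [mul_assoc]]
    rw [Matrix.trace_mul_comm]
    rw [show Matrix.diagonal lam * (star V * (U * (Matrix.diagonal (Real.log ∘ mu) * star U))) * V
        = Matrix.diagonal lam * (W * (Matrix.diagonal (Real.log ∘ mu) * star W))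
        from by rw [hWdef, hWstar]; simp only [mul_assoc]]
    rw [trace_diag_conj]
    rfl
  -- trace of P * log P
  have e0 : (P * matrixLog P).trace = ∑ i, lam i * Real.log (lam i) := by
    rw [hlogP, hPspec]
    rw [show V * Matrix.diagonal lam * star V * (V * Matrix.diagonal (Real.log ∘ lam) * star V)
        = V * (Matrix.diagonal lam * ((star V * V) * (Matrix.diagonal (Real.log ∘ lam) * star V)))
        from by simp only [mul_assoc]]
    rw [hV2, one_mul, show V * (Matrix.diagonal lam * (Matrix.diagonal (Real.log ∘ lam) * star V))
        = V * (Matrix.diagonal lam * Matrix.diagonal (Real.log ∘ lam)) * star V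
        from by simp only [mul_assoc]]
    rw [Matrix.trace_mul_cycle, hV2, one_mul, Matrix.diagonal_mul_diagonal, Matrix.trace_diagonal]
    rfl
  have hMCEQ : MCE P Q = -(∑ i, ∑ j, lam i * W i j ^ 2 * Real.log (mu j)) + ∑ j, mu j := by
    rw [MCE, Matrix.trace_add, Matrix.trace_neg, e1, htrQ]
  have hMCEP : MCE P P = -(∑ i, lam i * Real.log (lam i)) + ∑ i, lam i := by
    rw [MCE, Matrix.trace_add, Matrix.trace_neg, e0, htrP]
  -- the key sum identity
  have h1 : ∑ i, ∑ j, W i j ^ 2 * mu j = ∑ j, mu j := by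
    rw [Finset.sum_comm]
    exact Finset.sum_congr rfl fun j _ => by rw [← Finset.sum_mul, hcol j, one_mul]
  have h2 : ∑ i, ∑ j, W i j ^ 2 * lam i = ∑ i, lam i := by
    exact Finset.sum_congr rfl fun i _ => by rw [← Finset.sum_mul, hrow i, one_mul]
  have h3 : ∑ i, ∑ j, W i j ^ 2 * (lam i * Real.log (lam i)) = ∑ i, lam i * Real.log (lam i) := by
    exact Finset.sum_congr rfl fun i _ => by rw [← Finset.sum_mul, hrow i, one_mul]
  have hsum : MCE P Q - MCE P P
      = ∑ i, ∑ j, W i j ^ 2 * (mu j - lam i - lam i * (Real.log (mu j) - Real.log (lam i))) := by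
    have expand : ∀ i j : Fin n,
        W i j ^ 2 * (mu j - lam i - lam i * (Real.log (mu j) - Real.log (lam i)))
        = W i j ^ 2 * mu j - W i j ^ 2 * lam i - lam i * W i j ^ 2 * Real.log (mu j)
          + W i j ^ 2 * (lam i * Real.log (lam i)) := fun i j => by ring
    calc MCE P Q - MCE P P
        = (∑ i, ∑ j, W i j ^ 2 * mu j) - (∑ i, ∑ j, W i j ^ 2 * lam i)
          - (∑ i, ∑ j, lam i * W i j ^ 2 * Real.log (mu j))
          + (∑ i, ∑ j, W i j ^ 2 * (lam i * Real.log (lam i))) := by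
          rw [hMCEQ, hMCEP, h1, h2, h3]; ring
      _ = ∑ i, ∑ j, W i j ^ 2 * (mu j - lam i - lam i * (Real.log (mu j) - Real.log (lam i))) := by
          simp only [expand, Finset.sum_add_distrib, Finset.sum_sub_distrib]
  have hterm_nonneg : ∀ i j : Fin n,
      0 ≤ W i j ^ 2 * (mu j - lam i - lam i * (Real.log (mu j) - Real.log (lam i))) :=
    fun i j => mul_nonneg (sq_nonneg _) (scalar_klein (hlam i) (hmu j))
  have hS : 0 ≤ MCE P Q - MCE P P := by
    rw [hsum]
    exact Finset.sum_nonneg fun i _ => Finset.sum_nonneg fun j _ => hterm_nonneg i j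
  refine ⟨by linarith, ?_, ?_⟩
  · intro heq
    have hzero : ∑ i, ∑ j, W i j ^ 2 * (mu j - lam i - lam i * (Real.log (mu j) - Real.log (lam i))) = 0 := by
      rw [← hsum, heq]; ring
    have hterm : ∀ i j : Fin n,
        W i j ^ 2 * (mu j - lam i - lam i * (Real.log (mu j) - Real.log (lam i))) = 0 := by
      intro i j
      have houter := (Finset.sum_eq_zero_iff_of_nonneg
        (fun i _ => Finset.sum_nonneg fun j _ => hterm_nonneg i j)).mp hzero i (Finset.mem_univ i)
      exact (Finset.sum_eq_zero_iff_of_nonneg (fun j _ => hterm_nonneg i j)).mp houter j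
        (Finset.mem_univ j)
    have hkey : ∀ i j : Fin n, W i j ≠ 0 → mu j = lam i := by
      intro i j hw
      by_contra hne
      have hstrict := scalar_klein_strict (hlam i) (hmu j) hne
      have hwpos : 0 < W i j ^ 2 := by positivity
      nlinarith [hterm i j]
    have hdiag : W * Matrix.diagonal mu * star W = Matrix.diagonal lam := by
      ext i k
      rw [Matrix.mul_apply]
      calc ∑ j, (W * Matrix.diagonal mu) i j * (star W) j k
          = ∑ j, lam i * (W i j * (star W) j k) := by
            refine Finset.sum_congr rfl fun j _ => ?_
            by_cases h : W i j = 0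
            · simp [Matrix.mul_diagonal, h]
            · rw [Matrix.mul_diagonal, hkey i j h]; ring
        _ = lam i * (W * star W) i k := by rw [← Finset.mul_sum, Matrix.mul_apply]
        _ = lam i * (1 : Matrix (Fin n) (Fin n) ℝ) i k := by rw [hW1]
        _ = Matrix.diagonal lam i k := by
            by_cases h : i = k <;> simp [Matrix.one_apply, Matrix.diagonal_apply, h]
    have hQP : V * (W * Matrix.diagonal mu * star W) * star V = Q := by
      rw [hWdef, hWstar, hQspec]
      simp only [mul_assoc]
      rw [hV1, mul_one, ← mul_assoc, hV1, one_mul]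
    rw [hdiag] at hQP
    exact (hPspec.trans hQP).symm
  · rintro rfl; rfl

/-- For symmetric positive definite `P, Q`, the matrix cross-entropy satisfies
`MCE(P, Q) ≥ MCE(P, P) = tr(P) − tr(P log P)`, with equality iff `Q = P`; hence `Q = P` is
the unique minimizer of `Q ↦ MCE(P, Q)` over positive definite matrices. -/
theorem mce_ge_and_eq_iff_and_unique_min {n : ℕ}
    (P Q : Matrix (Fin n) (Fin n) ℝ) (hP : P.PosDef) (hQ : Q.PosDef) :
    MCE P P ≤ MCE P Q ∧ MCE P P = P.trace - (P * matrixLog P).trace ∧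
      (MCE P Q = MCE P P ↔ Q = P) ∧
      ∀ Q' : Matrix (Fin n) (Fin n) ℝ, Q'.PosDef → Q' ≠ P → MCE P P < MCE P Q' := by
  obtain ⟨hle, hiff⟩ := klein_main P Q hP hQ
  refine ⟨hle, ?_, hiff, ?_⟩
  · rw [MCE, Matrix.trace_add, Matrix.trace_neg]; ring
  · intro Q' hQ' hne
    obtain ⟨hle', hiff'⟩ := klein_main P Q' hP hQ'
    exact lt_of_le_of_ne hle' (fun h => hne (hiff'.mp h.symm))
end

section
/- Let Z ∈ ℝ^{d×B} be a matrix whose B columns all have unit Euclidean norm, and let ε > 0. Then L_TCR(Z) ≥ −(d/2)·log(1 + 1/ε²), and equality holds if and only if (1/B)ZZᵀ = (1/d)I_d. In other words, the global and unique minimizer of the TCR loss under the unit-norm-column constraint is achieved exactly when (1/B)ZZᵀ = (1/d)I_d. -/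
open Matrix MeasureTheory

/-! Let `μ` be the eigenvalues of the positive semidefinite matrix `ZZᵀ` and `c = d/(Bε²)`.
Then `log det (I + c ZZᵀ) = ∑ᵢ log (1 + c μᵢ)`, and unit columns give `∑ᵢ μᵢ = tr ZZᵀ = B`.
By strict concavity of `log` (Jensen) the sum is at most `d · log (1 + cB/d) = d · log (1 + 1/ε²)`,
with equality iff all `μᵢ = B/d`, i.e. iff `ZZᵀ = (B/d) I`. -/

theorem Matrix.trace_mul_transpose_self {m n R : Type*} [Fintype m] [Fintype n]
    [CommSemiring R] (Z : Matrix m n R) : (Z * Zᵀ).trace = ∑ j, ∑ i, Z i j ^ 2 := by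
  rw [trace_mul_comm]
  simp [trace, mul_apply, sq]

namespace Matrix.IsHermitian

variable {𝕜 n : Type*} [RCLike 𝕜] [Fintype n] [DecidableEq n] {A : Matrix n n 𝕜}

theorem det_one_add_smul (hA : A.IsHermitian) (c : 𝕜) :
    (1 + c • A).det = ∏ i, (1 + c * hA.eigenvalues i) := by
  conv_lhs => rw [hA.spectral_theorem]
  rw [← map_one (Unitary.conjStarAlgAut 𝕜 _ hA.eigenvectorUnitary), ← map_smul, ← map_add,
    Unitary.conjStarAlgAut_apply, det_conj_of_mul_eq_one (by simp) (by simp),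
    ← diagonal_one, ← diagonal_smul, diagonal_add, det_diagonal]
  simp

theorem eq_smul_one_iff (hA : A.IsHermitian) (m : ℝ) :
    A = m • (1 : Matrix n n 𝕜) ↔ ∀ i, hA.eigenvalues i = m := by
  rw [← EmbeddingLike.apply_eq_iff_eq
      (Unitary.conjStarAlgAut 𝕜 _ (star hA.eigenvectorUnitary)),
    conjStarAlgAut_star_eigenvectorUnitary, RCLike.real_smul_eq_coe_smul (K := 𝕜), map_smul,
    map_one, ← diagonal_one, ← diagonal_smul, diagonal_eq_diagonal_iff]
  simp

end Matrix.IsHermitian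

theorem Matrix.PosSemidef.log_det_one_add_smul {n : Type*} [Fintype n] [DecidableEq n]
    {A : Matrix n n ℝ} (hA : A.PosSemidef) {c : ℝ} (hc : 0 ≤ c) :
    Real.log (1 + c • A).det = ∑ i, Real.log (1 + c * hA.isHermitian.eigenvalues i) := by
  rw [hA.isHermitian.det_one_add_smul]
  simp only [RCLike.ofReal_real_eq_id, id_eq]
  refine Real.log_prod fun i _ => ?_
  have := hA.eigenvalues_nonneg i
  positivity

namespace Real

open Finset

variable {ι : Type*} [Fintype ι] {x : ι → ℝ} {a : ℝ}

theorem sum_log_le_card_mul_log (hx : ∀ i, 0 < x i) (hsum : ∑ i, x i = Fintype.card ι * a) :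
    ∑ i, log (x i) ≤ Fintype.card ι * log a := by
  rcases isEmpty_or_nonempty ι with hι | hι
  · simp
  have hcard : (0 : ℝ) < Fintype.card ι := by exact_mod_cast Fintype.card_pos
  have jensen := strictConcaveOn_log_Ioi.concaveOn.le_map_sum (t := univ)
    (w := fun _ => (Fintype.card ι : ℝ)⁻¹) (p := x) (by intros; positivity)
    (by simp [hcard.ne']) (fun i _ => hx i)
  simp only [smul_eq_mul, ← mul_sum, hsum, inv_mul_cancel_left₀ hcard.ne'] at jensen
  rwa [inv_mul_le_iff₀ hcard] at jensen

theorem sum_log_eq_card_mul_log_iff (hx : ∀ i, 0 < x i)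
    (hsum : ∑ i, x i = Fintype.card ι * a) :
    ∑ i, log (x i) = Fintype.card ι * log a ↔ ∀ i, x i = a := by
  rcases isEmpty_or_nonempty ι with hι | hι
  · simp
  have hcard : (0 : ℝ) < Fintype.card ι := by exact_mod_cast Fintype.card_pos
  have jensen := strictConcaveOn_log_Ioi.map_sum_eq_iff_of_pos (t := univ)
    (w := fun _ => (Fintype.card ι : ℝ)⁻¹) (p := x) (by intros; positivity)
    (by simp [hcard.ne']) (fun i _ => hx i)
  simp only [smul_eq_mul, ← mul_sum, hsum, inv_mul_cancel_left₀ hcard.ne', mem_univ,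
    forall_const] at jensen
  rw [eq_comm, inv_mul_eq_iff_eq_mul₀ hcard.ne'] at jensen
  rw [jensen]
  refine ⟨fun h i => ?_, fun h j k => by rw [h, h]⟩
  have hsum' : ∑ j, x j = Fintype.card ι * x i := by simp [fun j => @h j i]
  exact mul_left_cancel₀ hcard.ne' (hsum'.symm.trans hsum)

end Real

/-- For `Z ∈ ℝ^{d×B}` with unit-norm columns and `ε > 0`,
`L_TCR(Z) ≥ −(d/2)·log(1 + 1/ε²)`, with equality iff `(1/B)ZZᵀ = (1/d)I_d`;
i.e. the TCR loss is uniquely minimized exactly at `(1/B)ZZᵀ = (1/d)I_d`. -/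
theorem tcr_min {d B : ℕ} (hd : 0 < d) (hB : 0 < B)
    (Z : Matrix (Fin d) (Fin B) ℝ) (hZ : ∀ j, ∑ i, (Z i j) ^ 2 = 1)
    (ε : ℝ) (hε : 0 < ε) :
    -((d : ℝ) / 2) * Real.log (1 + 1 / ε ^ 2) ≤ LTCR ε Z ∧
      (LTCR ε Z = -((d : ℝ) / 2) * Real.log (1 + 1 / ε ^ 2) ↔
        (B : ℝ)⁻¹ • (Z * Zᵀ) = (d : ℝ)⁻¹ • 1) := by
  have hPSD : (Z * Zᵀ).PosSemidef := by
    simpa using posSemidef_self_mul_conjTranspose Z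
  set μ := hPSD.isHermitian.eigenvalues
  set c : ℝ := d / (B * ε ^ 2)
  have hx : ∀ i, 0 < 1 + c * μ i := fun i => by
    have := hPSD.eigenvalues_nonneg i
    positivity
  have hsum : ∑ i, (1 + c * μ i) = Fintype.card (Fin d) * (1 + 1 / ε ^ 2) := by
    have htrace : ∑ i, μ i = B := by
      have := hPSD.isHermitian.trace_eq_sum_eigenvalues
      simpa [hZ, trace_mul_transpose_self] using this.symm
    rw [Finset.sum_add_distrib, ← Finset.mul_sum, htrace]
    simp only [c, Finset.sum_const, Finset.card_univ, Fintype.card_fin, nsmul_eq_mul, mul_one]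
    field_simp
  have hminimizer : (B : ℝ)⁻¹ • (Z * Zᵀ) = (d : ℝ)⁻¹ • 1 ↔ ∀ i, 1 + c * μ i = 1 + 1 / ε ^ 2 := by
    have hc : c ≠ 0 := by positivity
    have hcm : c * (B / d) = 1 / ε ^ 2 := by simp only [c]; field_simp
    rw [inv_smul_eq_iff₀ (by positivity), smul_smul, ← div_eq_mul_inv,
      hPSD.isHermitian.eq_smul_one_iff]
    refine forall_congr' fun i => ?_
    rw [← hcm, add_right_inj, mul_right_inj' hc]
  rw [LTCR, hPSD.log_det_one_add_smul (by positivity), hminimizer,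
    ← Real.sum_log_eq_card_mul_log_iff hx hsum]
  have hle := Real.sum_log_le_card_mul_log hx hsum
  simp only [Fintype.card_fin] at hle ⊢
  exact ⟨by linarith, by constructor <;> intro h <;> linarith⟩
end

section
/- Let (Ω, μ) be a probability space and X : Ω → ℝ^d a random vector with ‖X(ω)‖₂ = 1 almost surely and each component square-integrable. Let C be the centered covariance matrix of X, i.e., C_{ij} = E[X_i X_j] − E[X_i]·E[X_j]. If the effective rank of C equals d (its maximal possible value) and tr(C) ≥ 1, then E[X] = 0 and C = (1/d)·I_d. -/
open Matrix MeasureTheory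

/-!
Since `‖X‖ = 1` almost surely, `tr C = E‖X‖² - ‖E X‖² = 1 - ‖E X‖²`, so `tr C ≥ 1` forces
`E X = 0` and `tr C = 1`. The eigenvalues of the positive semidefinite matrix `C` then form a
probability vector whose Shannon entropy is `log (erank C) = log d`, the largest possible value on
`d` outcomes. By the equality case of Jensen's inequality for the strictly concave `x ↦ -x log x`
the eigenvalues all equal `1/d`, and a symmetric matrix with a single eigenvalue `c` is `c • 1`.
-/

open ProbabilityTheory Real

theorem eq_inv_card_of_sum_negMulLog_eq_log_card {ι : Type*} [Fintype ι] {p : ι → ℝ}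
    (hp : ∀ i, 0 ≤ p i) (hsum : ∑ i, p i = 1)
    (hent : ∑ i, negMulLog (p i) = log (Fintype.card ι)) (i : ι) :
    p i = (Fintype.card ι : ℝ)⁻¹ := by
  set n : ℝ := (Fintype.card ι : ℝ)
  have hn : 0 < n := Nat.cast_pos.2 (Fintype.card_pos_iff.2 ⟨i⟩)
  have hw : ∑ _j : ι, n⁻¹ = 1 := by simp [n, hn.ne']
  have hmean : ∑ j : ι, n⁻¹ • p j = n⁻¹ := by simp [← Finset.mul_sum, hsum]
  have hjensen_eq : negMulLog (∑ j, n⁻¹ • p j) = ∑ j, n⁻¹ • negMulLog (p j) := by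
    rw [hmean, ← Finset.smul_sum, hent, negMulLog, log_inv, smul_eq_mul]
    ring
  have hconst := strictConcaveOn_negMulLog.eq_of_map_sum_eq (t := .univ) (w := fun _ ↦ n⁻¹)
    (fun _ _ ↦ inv_pos.2 hn) hw (fun j _ ↦ hp j) hjensen_eq.le
  have : ∑ j, p j = n * p i := by
    simp [Finset.sum_congr rfl fun j _ ↦ hconst (Finset.mem_univ j) (Finset.mem_univ i), n]
  field_simp
  linarith

namespace Matrix.IsHermitian

variable {𝕜 n : Type*} [RCLike 𝕜] [Fintype n] [DecidableEq n] {A : Matrix n n 𝕜}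

theorem eq_smul_one_of_eigenvalues_eq (hA : A.IsHermitian) {c : ℝ}
    (h : ∀ i, hA.eigenvalues i = c) : A = (c : 𝕜) • 1 := by
  have hdiag : diagonal (RCLike.ofReal ∘ hA.eigenvalues) = (c : 𝕜) • (1 : Matrix n n 𝕜) := by
    rw [smul_one_eq_diagonal]
    congr 1
    ext i
    simp [h i]
  rw [hA.spectral_theorem, hdiag, map_smul, map_one]

end Matrix.IsHermitian

theorem erank_eq_exp_sum_negMulLog {n : Type*} [Fintype n] [DecidableEq n] {A : Matrix n n ℝ}
    (hA : A.IsHermitian) (hsum : ∑ i, hA.eigenvalues i = 1) :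
    erank A = Real.exp (∑ i, negMulLog (hA.eigenvalues i)) := by
  rw [erank, dif_pos hA, hsum]
  simp only [div_one, negMulLog, neg_mul, Finset.sum_neg_distrib]

section CovarianceMatrix

variable {Ω ι : Type*} [MeasurableSpace Ω] {μ : Measure Ω} {X : Ω → ι → ℝ}

noncomputable def covarianceMatrix (μ : Measure Ω) (X : Ω → ι → ℝ) : Matrix ι ι ℝ :=
  .of fun i j ↦ cov[fun ω ↦ X ω i, fun ω ↦ X ω j; μ]

theorem covarianceMatrix_eq_sub [IsProbabilityMeasure μ] (hX : ∀ i, MemLp (fun ω ↦ X ω i) 2 μ) :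
    covarianceMatrix μ X = .of fun i j ↦
      (∫ ω, X ω i * X ω j ∂μ) - (∫ ω, X ω i ∂μ) * (∫ ω, X ω j ∂μ) := by
  ext i j
  exact covariance_eq_sub (hX i) (hX j)

theorem isHermitian_covarianceMatrix : (covarianceMatrix μ X).IsHermitian := by
  ext i j
  exact covariance_comm _ _

variable [Fintype ι]

theorem posSemidef_covarianceMatrix [IsFiniteMeasure μ] (hX : ∀ i, MemLp (fun ω ↦ X ω i) 2 μ) :
    (covarianceMatrix μ X).PosSemidef := by
  refine .of_dotProduct_mulVec_nonneg isHermitian_covarianceMatrix fun x ↦ ?_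
  have hquad : star x ⬝ᵥ (covarianceMatrix μ X *ᵥ x) = Var[fun ω ↦ ∑ i, x i * X ω i; μ] := by
    rw [variance_fun_sum fun i ↦ (hX i).const_mul (x i)]
    simp only [dotProduct, mulVec, covarianceMatrix, of_apply, star_trivial, Finset.mul_sum,
      covariance_const_mul_left, covariance_const_mul_right]
    exact Finset.sum_congr rfl fun i _ ↦ Finset.sum_congr rfl fun j _ ↦ by ring
  exact hquad ▸ variance_nonneg _ _

theorem trace_covarianceMatrix [IsProbabilityMeasure μ] (hX : ∀ i, MemLp (fun ω ↦ X ω i) 2 μ) :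
    (covarianceMatrix μ X).trace = ∫ ω, ∑ i, X ω i ^ 2 ∂μ - ∑ i, (∫ ω, X ω i ∂μ) ^ 2 := by
  rw [integral_finsetSum _ fun i _ ↦ (hX i).integrable_sq, ← Finset.sum_sub_distrib]
  refine Finset.sum_congr rfl fun i _ ↦ ?_
  rw [diag_apply, covarianceMatrix, of_apply, covariance_self (hX i).aemeasurable,
    variance_eq_sub (hX i)]
  rfl

end CovarianceMatrix

/-- If a random vector `X` on the unit sphere of `ℝ^d` (components
square-integrable) has centered covariance matrix `C` with maximal effective rank `d`
and `tr(C) ≥ 1`, then `E[X] = 0` and `C = (1/d)·I_d`. -/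
theorem covariance_max_erank {d : ℕ} {Ω : Type*} [MeasurableSpace Ω]
    (μ : Measure Ω) [IsProbabilityMeasure μ] (X : Ω → Fin d → ℝ)
    (hX : ∀ i, MemLp (fun ω => X ω i) 2 μ)
    (hnorm : ∀ᵐ ω ∂μ, ∑ i, (X ω i) ^ 2 = 1)
    (C : Matrix (Fin d) (Fin d) ℝ)
    (hC : C = Matrix.of fun i j =>
      (∫ ω, X ω i * X ω j ∂μ) - (∫ ω, X ω i ∂μ) * (∫ ω, X ω j ∂μ))
    (herank : erank C = d) (htr : 1 ≤ C.trace) :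
    (∀ i, ∫ ω, X ω i ∂μ = 0) ∧ C = (d : ℝ)⁻¹ • 1 := by
  rw [← covarianceMatrix_eq_sub hX] at hC
  subst hC
  have htrace : (covarianceMatrix μ X).trace = 1 - ∑ i, (∫ ω, X ω i ∂μ) ^ 2 := by
    rw [trace_covarianceMatrix hX, integral_congr_ae hnorm, integral_const, probReal_univ,
      one_smul]
  have hmean_sq : ∑ i, (∫ ω, X ω i ∂μ) ^ 2 = 0 :=
    le_antisymm (by linarith) (Finset.sum_nonneg fun i _ ↦ sq_nonneg _)
  have hmean (i : Fin d) : ∫ ω, X ω i ∂μ = 0 :=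
    pow_eq_zero_iff two_ne_zero |>.1 <|
      (Finset.sum_eq_zero_iff_of_nonneg fun j _ ↦ sq_nonneg _).1 hmean_sq i (Finset.mem_univ i)
  have hCpsd := posSemidef_covarianceMatrix hX
  have hsum : ∑ i, hCpsd.1.eigenvalues i = 1 := by
    simpa [hCpsd.1.trace_eq_sum_eigenvalues, hmean_sq] using htrace
  have hentropy : ∑ i, negMulLog (hCpsd.1.eigenvalues i) = log (Fintype.card (Fin d)) := by
    rw [erank_eq_exp_sum_negMulLog hCpsd.1 hsum] at herank
    rw [Fintype.card_fin, ← herank, log_exp]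
  have heigen := eq_inv_card_of_sum_negMulLog_eq_log_card hCpsd.eigenvalues_nonneg hsum hentropy
  rw [Fintype.card_fin] at heigen
  exact ⟨hmean, hCpsd.1.eq_smul_one_of_eigenvalues_eq heigen⟩
end
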